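/- If the endpoints of a segment satisfy ‖x₁ − p‖² ≥ r² and ‖x₂ − p‖² ≥ r², and additionally the midpoint m = (x₁+x₂)/2 satisfies ‖m − p‖² ≥ r² + ‖x₁−x₂‖²/4, then every point of the segment [x₁, x₂] has distance at least r from p. -/

import Mathlib

lemma comb_norm_sq (a b : EuclideanSpace ℝ (Fin 2)) (t : ℝ) :
    ‖(1 - t) • a + t • b‖ ^ 2 =
      (1 - t) ^ 2 * ‖a‖ ^ 2 + 2 * t * (1 - t) * (inner ℝ a b : ℝ) + t ^ 2 * ‖b‖ ^ 2 := by
  rw [← real_inner_self_eq_norm_sq, ← real_inner_self_eq_norm_sq, ← real_inner_self_eq_norm_sq]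
  simp [norm_add_sq_real, norm_smul, mul_pow, Real.norm_eq_abs, sq_abs, inner_add_add_self, real_inner_smul_left, real_inner_smul_right, real_inner_comm a b]
  ring

/-- If both endpoints are at distance at least `r` from `p`, and the midpoint
satisfies the strengthened condition, then the whole segment keeps distance at
least `r` from `p`. -/
theorem midpoint_condition_implies_segment_avoidance
    (x₁ x₂ p : EuclideanSpace ℝ (Fin 2)) (r : ℝ) (hr : 0 ≤ r)
    (h1 : r ^ 2 ≤ ‖x₁ - p‖ ^ 2)
    (h2 : r ^ 2 ≤ ‖x₂ - p‖ ^ 2)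
    (hmid : r ^ 2 + ‖x₁ - x₂‖ ^ 2 / 4 ≤ ‖(1 / 2 : ℝ) • (x₁ + x₂) - p‖ ^ 2) :
    ∀ t : ℝ, t ∈ Set.Icc (0 : ℝ) 1 →
      r ≤ ‖(1 - t) • x₁ + t • x₂ - p‖ := by
  intro t ht
  obtain ⟨ht0, ht1⟩ := ht
  set a := x₁ - p
  set b := x₂ - p
  have hsub : ‖x₁ - x₂‖ ^ 2 = ‖a‖ ^ 2 - 2 * (inner ℝ a b : ℝ) + ‖b‖ ^ 2 := by
    have : x₁ - x₂ = a - b := by simp [a, b]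
    rw [this, ← real_inner_self_eq_norm_sq, ← real_inner_self_eq_norm_sq, ← real_inner_self_eq_norm_sq]
    simp [inner_sub_sub_self, real_inner_comm a b]; rw [norm_sub_sq_real]
  have hmid' : (1 / 2 : ℝ) • (x₁ + x₂) - p = (1 - (1/2 : ℝ)) • a + (1/2 : ℝ) • b := by
    simp [a, b, smul_sub, smul_add]; module
  have hcomb : (1 - t) • x₁ + t • x₂ - p = (1 - t) • a + t • b := by
    simp [a, b, smul_sub]; module
  rw [hsub, hmid', comb_norm_sq] at hmid
  have hs : r ^ 2 ≤ (inner ℝ a b : ℝ) := by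
    have h1' : r ^ 2 ≤ ‖a‖ ^ 2 := h1
    have h2' : r ^ 2 ≤ ‖b‖ ^ 2 := h2
    nlinarith [hmid]
  rw [hcomb]
  have key : r ^ 2 ≤ ‖(1 - t) • a + t • b‖ ^ 2 := by
    rw [comb_norm_sq]
    nlinarith [mul_nonneg (sq_nonneg (1 - t)) (sub_nonneg.2 h1), mul_nonneg (sq_nonneg t) (sub_nonneg.2 h2), mul_nonneg (mul_nonneg ht0 (by linarith : (0:ℝ) ≤ 1 - t)) (sub_nonneg.2 hs)]
  nlinarith [norm_nonneg ((1 - t) • a + t • b), key]
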